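/- The language PAR = { w ∈ {0,1}⁺ : the number of 1s in w is even } cannot be accepted by any shrinking cellular automaton in o(n) time, where n is the input length. -/
import Mathlib


/-- A shrinking cellular automaton over input alphabet `α`. -/
structure SCA (α : Type) where
  Q : Type
  fintypeQ : Fintype Q
  decEq : DecidableEq Q
  δ : Q → Q → Q → Q
  q : Q
  del : Q
  embed : α → Q
  accept : Q → Bool
  del_ne_q : del ≠ q
  inactive : ∀ a b, δ a q b = q
  embed_ne_q : ∀ x, embed x ≠ q

namespace SCA
variable {α : Type} (S : SCA α)

/-- One application of the local rule to every cell (boundary cells see the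
inactive state). -/
def raw (w : List S.Q) : List S.Q :=
  (List.range w.length).map fun i =>
    S.δ (if i = 0 then S.q else w.getD (i - 1) S.q) (w.getD i S.q) (w.getD (i + 1) S.q)

/-- The shrinking global transition: apply the local rule, then delete all
cells in the delete state. -/
def step (w : List S.Q) : List S.Q :=
  haveI := S.decEq
  (S.raw w).filter (fun c => decide (c ≠ S.del))

/-- Configuration reached from input `w` after `t` shrinking transitions. -/
def conf (w : List α) (t : ℕ) : List S.Q := S.step^[t] (w.map S.embed)

/-- `S` accepts `w` at step `t`: the leftmost active cell is accepting. -/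
def AcceptsAt (w : List α) (t : ℕ) : Prop :=
  haveI := S.decEq
  ∃ a, ((S.conf w t).dropWhile (fun c => decide (c = S.q))).head? = some a ∧
    S.accept a = true

/-- The language accepted by `S`. -/
def Lang : Set (List α) := {w | ∃ t, S.AcceptsAt w t}

end SCA

/-- `L ∈ SCA[O(T)]`. -/
def InSCA {α : Type} (L : Set (List α)) (T : ℕ → ℕ) : Prop :=
  ∃ (S : SCA α) (C : ℕ), S.Lang = L ∧
    ∀ w ∈ L, ∃ t ≤ C * T w.length + C, S.AcceptsAt w t

/-- `L ∈ SCA[o(n)]`. -/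
def InSCAo {α : Type} (L : Set (List α)) : Prop :=
  ∃ (S : SCA α) (T : ℕ → ℕ), S.Lang = L ∧
    (∀ w ∈ L, ∃ t ≤ T w.length, S.AcceptsAt w t) ∧
    (∀ ε : ℝ, 0 < ε → ∀ᶠ n in Filter.atTop, (T n : ℝ) ≤ ε * n)

/-- The parity language. -/
def PAR : Set (List Bool) := {w | w ≠ [] ∧ Even (w.count true)}


namespace SCA
variable {α : Type} (S : SCA α)

lemma length_raw (w : List S.Q) : (S.raw w).length = w.length := by simp [SCA.raw]

lemma raw_getElem (w : List S.Q) (i : ℕ) (h : i < (S.raw w).length) :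
    (S.raw w)[i] = S.δ (if i = 0 then S.q else w.getD (i-1) S.q) (w.getD i S.q)
      (w.getD (i+1) S.q) := by
  simp [SCA.raw]

lemma getD_arb (A : List S.Q) (s : S.Q) (B : List S.Q) (k j : ℕ) (d : S.Q) :
    (A ++ List.replicate k s ++ B).getD j d =
      if j < A.length then A.getD j d
      else if j < A.length + k then s
      else B.getD (j - A.length - k) d := by
  rw [List.append_assoc]
  simp only [List.getD_eq_getElem?_getD, List.getElem?_append, List.getElem?_replicate,
    List.length_replicate]
  split_ifs <;> simp_all <;> omega

lemma raw_split (A : List S.Q) (s : S.Q) (B : List S.Q) (k : ℕ) (hk : 2 ≤ k) :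
    S.raw (A ++ List.replicate k s ++ B) =
      (S.raw (A ++ [s, s])).take (A.length + 1) ++
        List.replicate (k - 2) (S.δ s s s) ++ (S.raw (s :: s :: B)).drop 1 := by
  have hlen : ∀ i ≤ A.length + 1, (A ++ List.replicate k s ++ B).getD i S.q
      = (A ++ [s, s]).getD i S.q := by
    intro i hi
    rw [S.getD_arb]
    rcases lt_or_ge i A.length with h | h
    · simp [List.getD_eq_getElem?_getD, List.getElem?_append, h]
    · rw [if_neg (by omega), if_pos (by omega), List.getD_eq_getElem?_getD,
        List.getElem?_append_right h]
      have : i - A.length < 2 := by omega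
      interval_cases h' : (i - A.length) <;> simp
  have hmid : ∀ i, A.length ≤ i → i < A.length + k →
      (A ++ List.replicate k s ++ B).getD i S.q = s := by
    intro i h1 h2
    rw [S.getD_arb, if_neg (by omega), if_pos h2]
  have hright : ∀ i, A.length + k - 2 ≤ i → (A ++ List.replicate k s ++ B).getD i S.q
      = (s :: s :: B).getD (i - (A.length + k - 2)) S.q := by
    intro i hi
    rw [S.getD_arb]
    rcases lt_or_ge i (A.length + k) with h | h
    · rw [if_neg (by omega), if_pos h]
      have : i - (A.length + k - 2) < 2 := by omega
      interval_cases h' : (i - (A.length + k - 2)) <;> simp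
    · rw [if_neg (by omega), if_neg (by omega)]
      have h2 : i - (A.length + k - 2) = (i - A.length - k) + 2 := by omega
      rw [h2]
      simp
  have hA2 : (S.raw (A ++ [s, s])).length = A.length + 2 := by simp [SCA.raw]
  have hB2 : (S.raw (s :: s :: B)).length = B.length + 2 := by simp [SCA.raw]
  have hLl : (A ++ List.replicate k s ++ B).length = A.length + k + B.length := by
    simp; omega
  have l1 : ((S.raw (A ++ [s, s])).take (A.length + 1)).length = A.length + 1 := by
    rw [List.length_take, hA2]; omega
  have l2 : ((S.raw (A ++ [s, s])).take (A.length + 1)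
      ++ List.replicate (k - 2) (S.δ s s s)).length = A.length + k - 1 := by
    rw [List.length_append, l1, List.length_replicate]; omega
  apply List.ext_getElem
  · rw [S.length_raw, hLl]
    rw [List.length_append, l2, List.length_drop, hB2]
    omega
  intro i h1 h2
  rw [S.raw_getElem]
  rcases lt_or_ge i (A.length + 1) with hc1 | hc1
  · rw [List.getElem_append_left (by rw [l2]; omega),
      List.getElem_append_left (by rw [l1]; omega),
      List.getElem_take, S.raw_getElem _ _ (by rw [hA2]; omega)]
    congr 1
    · split_ifs with h0
      · rfl
      · exact hlen _ (by omega)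
    · exact hlen _ (by omega)
    · exact hlen _ (by omega)
  rcases lt_or_ge i (A.length + k - 1) with hc2 | hc2
  · rw [List.getElem_append_left (by rw [l2]; omega),
      List.getElem_append_right (by rw [l1]; omega), List.getElem_replicate,
      if_neg (by omega), hmid (i-1) (by omega) (by omega), hmid i (by omega) (by omega),
      hmid (i+1) (by omega) (by omega)]
  · rw [List.getElem_append_right (by rw [l2]; omega), List.getElem_drop,
      S.raw_getElem _ _ (by rw [hB2]; rw [l2]; rw [S.length_raw, hLl] at h1; omega)]
    rw [l2] at *
    rw [if_neg (by omega), if_neg (by omega),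
      hright (i-1) (by omega), hright i (by omega), hright (i+1) (by omega)]
    rw [S.length_raw, hLl] at h1
    congr 2 <;> omega


def flt (l : List S.Q) : List S.Q :=
  haveI := S.decEq
  l.filter (fun c => decide (c ≠ S.del))

lemma step_eq (w : List S.Q) : S.step w = S.flt (S.raw w) := rfl

lemma flt_append (l l' : List S.Q) : S.flt (l ++ l') = S.flt l ++ S.flt l' := by
  simp [flt, List.filter_append]

lemma flt_replicate_ne (n : ℕ) (a : S.Q) (h : a ≠ S.del) :
    S.flt (List.replicate n a) = List.replicate n a := by
  haveI := S.decEq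
  simp [flt, List.filter_replicate, h]

lemma flt_replicate_del (n : ℕ) : S.flt (List.replicate n S.del) = [] := by
  haveI := S.decEq
  simp [flt, List.filter_replicate]

def tri (e : S.Q) : ℕ → List S.Q × S.Q × List S.Q
  | 0 => ([], e, [])
  | t+1 =>
    (S.flt ((S.raw ((tri e t).1 ++ [(tri e t).2.1, (tri e t).2.1])).take
        ((tri e t).1.length + 1)),
     S.δ (tri e t).2.1 (tri e t).2.1 (tri e t).2.1,
     S.flt ((S.raw ((tri e t).2.1 :: (tri e t).2.1 :: (tri e t).2.2)).drop 1))

lemma conf_replicate (x : α) (t : ℕ)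
    (hnc : ∀ u < t, S.δ (S.tri (S.embed x) u).2.1 (S.tri (S.embed x) u).2.1
      (S.tri (S.embed x) u).2.1 ≠ S.del) :
    ∀ m, 2*t + 2 ≤ m →
    S.conf (List.replicate m x) t =
      (S.tri (S.embed x) t).1 ++ List.replicate (m - 2*t) (S.tri (S.embed x) t).2.1
        ++ (S.tri (S.embed x) t).2.2 := by
  induction t with
  | zero => intro m hm; simp [conf, tri]
  | succ t ih =>
    intro m hm
    have hstep : S.conf (List.replicate m x) (t+1) = S.step (S.conf (List.replicate m x) t) := by
      simp [conf, Function.iterate_succ_apply']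
    rw [hstep, ih (fun u hu => hnc u (by omega)) m (by omega), step_eq,
      S.raw_split _ _ _ _ (by omega), flt_append, flt_append,
      S.flt_replicate_ne _ _ (hnc t (by omega))]
    have h2 : m - 2*t - 2 = m - 2*(t+1) := by omega
    rw [h2]
    simp [tri]

lemma conf_collapse (x : α) (t : ℕ)
    (hnc : ∀ u < t, S.δ (S.tri (S.embed x) u).2.1 (S.tri (S.embed x) u).2.1
      (S.tri (S.embed x) u).2.1 ≠ S.del)
    (hc : S.δ (S.tri (S.embed x) t).2.1 (S.tri (S.embed x) t).2.1
      (S.tri (S.embed x) t).2.1 = S.del) :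
    ∀ m, 2*t + 2 ≤ m →
    S.conf (List.replicate m x) (t+1) =
      (S.tri (S.embed x) (t+1)).1 ++ (S.tri (S.embed x) (t+1)).2.2 := by
  intro m hm
  have hstep : S.conf (List.replicate m x) (t+1) = S.step (S.conf (List.replicate m x) t) := by
    simp [conf, Function.iterate_succ_apply']
  rw [hstep, S.conf_replicate x t hnc m hm, step_eq,
    S.raw_split _ _ _ _ (by omega), flt_append, flt_append, hc, S.flt_replicate_del]
  simp [tri]

lemma conf_add (w : List α) (u v : ℕ) : S.conf w (u + v) = S.step^[u] (S.conf w v) :=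
  Function.iterate_add_apply _ _ _ _

lemma dropWhile_rep_head {β : Type} (p : β → Bool) (A : List β) (s : β) (B : List β)
    (k k' : ℕ) (hk : k ≠ 0) (hk' : k' ≠ 0) :
    ((A ++ List.replicate k s ++ B).dropWhile p).head? =
      ((A ++ List.replicate k' s ++ B).dropWhile p).head? := by
  induction A with
  | nil =>
    simp only [List.nil_append]
    have aux : ∀ j, p s = true → (List.replicate j s ++ B).dropWhile p = B.dropWhile p := by
      intro j hp
      induction j with
      | zero => simp
      | succ j ihj => simp [List.replicate_succ, List.dropWhile_cons, hp, ihj]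
    cases hp : p s
    · obtain ⟨j, rfl⟩ : ∃ j, k = j + 1 := ⟨k-1, by omega⟩
      obtain ⟨j', rfl⟩ : ∃ j, k' = j + 1 := ⟨k'-1, by omega⟩
      simp [List.replicate_succ, List.dropWhile_cons, hp]
    · rw [aux k hp, aux k' hp]
  | cons x A ih =>
    cases hp : p x
    · simp [List.dropWhile_cons, hp]
    · simpa [List.dropWhile_cons, hp] using ih

lemma acceptsAt_of_rep {w w' : List α} {t t' : ℕ} (A : List S.Q) (s : S.Q) (B : List S.Q)
    {k k' : ℕ} (hk : k ≠ 0) (hk' : k' ≠ 0)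
    (h1 : S.conf w t = A ++ List.replicate k s ++ B)
    (h2 : S.conf w' t' = A ++ List.replicate k' s ++ B) :
    S.AcceptsAt w t → S.AcceptsAt w' t' := by
  intro hA
  unfold SCA.AcceptsAt at hA ⊢
  obtain ⟨a, ha, hacc⟩ := hA
  refine ⟨a, ?_, hacc⟩
  rw [h2, dropWhile_rep_head _ _ _ _ k' k hk' hk, ← h1]
  exact ha

lemma acceptsAt_congr {w w' : List α} {t t' : ℕ}
    (h : S.conf w t = S.conf w' t') : S.AcceptsAt w t → S.AcceptsAt w' t' := by
  intro hA
  unfold SCA.AcceptsAt at hA ⊢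
  rw [← h]
  exact hA


end SCA

/-- `PAR ∉ SCA[o(n)]`. -/
theorem par_not_in_sca_sublinear : ¬ InSCAo PAR := by
  rintro ⟨S, T, hLang, hAcc, hSub⟩
  obtain ⟨N, hN⟩ := Filter.eventually_atTop.1 (hSub (1/4) (by norm_num))
  obtain ⟨n, hn4, hneven, hT4⟩ : ∃ n : ℕ, 4 ≤ n ∧ Even n ∧ 4 * T n ≤ n := by
    refine ⟨2*N+4, by omega, ⟨N+2, by ring⟩, ?_⟩
    have h1 := hN (2*N+4) (by omega)
    have h2 : ((4 * T (2*N+4) : ℕ) : ℝ) ≤ ((2*N+4 : ℕ) : ℝ) := by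
      push_cast at h1 ⊢
      linarith
    exact_mod_cast h2
  have hcount : ∀ m : ℕ, (List.replicate m true).count true = m := by
    intro m; simp
  have hwP : List.replicate n true ∈ PAR := by
    refine ⟨by simp; omega, ?_⟩
    rw [hcount]
    exact hneven
  have hw'P : List.replicate (n+1) true ∉ PAR := by
    rintro ⟨-, he⟩
    rw [hcount] at he
    obtain ⟨c, hc⟩ := he
    obtain ⟨d, hd⟩ := hneven
    omega
  obtain ⟨t₀, ht₀T, ht₀⟩ := hAcc _ hwP
  rw [List.length_replicate] at ht₀T
  have ht₀n : 2 * t₀ + 2 ≤ n := by omega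
  have hnotacc : ∀ t, ¬ S.AcceptsAt (List.replicate (n+1) true) t := by
    intro t ht
    exact hw'P (hLang ▸ (⟨t, ht⟩ : List.replicate (n+1) true ∈ S.Lang))
  classical
  by_cases hcol : ∀ u < t₀, S.δ (S.tri (S.embed true) u).2.1 (S.tri (S.embed true) u).2.1
      (S.tri (S.embed true) u).2.1 ≠ S.del
  · have h1 := S.conf_replicate true t₀ hcol n ht₀n
    have h2 := S.conf_replicate true t₀ hcol (n+1) (by omega)
    exact hnotacc t₀
      (S.acceptsAt_of_rep _ _ _ (k := n - 2*t₀) (k' := n+1 - 2*t₀)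
        (by omega) (by omega) h1 h2 ht₀)
  · push_neg at hcol
    have hex : ∃ u, u < t₀ ∧ S.δ (S.tri (S.embed true) u).2.1 (S.tri (S.embed true) u).2.1
        (S.tri (S.embed true) u).2.1 = S.del := hcol
    obtain ⟨hvlt, hvdel⟩ := Nat.find_spec hex
    have hncv : ∀ u < Nat.find hex, S.δ (S.tri (S.embed true) u).2.1 (S.tri (S.embed true) u).2.1
        (S.tri (S.embed true) u).2.1 ≠ S.del := by
      intro u hu hd
      exact Nat.find_min hex hu ⟨by omega, hd⟩
    set v := Nat.find hex with hv
    have e1 := S.conf_collapse true v hncv hvdel n (by omega)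
    have e2 := S.conf_collapse true v hncv hvdel (n+1) (by omega)
    have d1 : t₀ = t₀ - (v+1) + (v+1) := by omega
    have c1 : S.conf (List.replicate n true) t₀
        = S.step^[t₀ - (v+1)] (S.conf (List.replicate n true) (v+1)) := by
      conv_lhs => rw [d1]
      exact S.conf_add _ _ _
    have c2 : S.conf (List.replicate (n+1) true) t₀
        = S.step^[t₀ - (v+1)] (S.conf (List.replicate (n+1) true) (v+1)) := by
      conv_lhs => rw [d1]
      exact S.conf_add _ _ _
    have heq : S.conf (List.replicate n true) t₀ = S.conf (List.replicate (n+1) true) t₀ := by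
      rw [c1, c2, e1, e2]
    exact hnotacc t₀ (S.acceptsAt_congr heq ht₀)
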